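/- arXiv:math/0702650 — 2 statements merged into one kernel-verified Lean document; each statement's English description precedes it below -/
import Mathlib

section
/- Let θ_j = j^{-α} with α > 1. Then there is a constant D > 0 such that for all j ≥ 1, Σ_{k≠j} (θ_j - θ_k)^{-2} θ_j θ_k ≤ D j². -/
/-!
Put `m = min (j, k)`, `M = max (j, k)` and `d = M - m`. The summand equals
`m^α M^α / (M^α - m^α)^2`, and `M^α - m^α ≥ d M^(α-1)` bounds it by `M^(2-α) m^α / d^2`.
This is at most `m^2 (d^(-2) + d^(-α))`: for `α ≥ 2` because `M^(2-α) ≤ m^(2-α)`, and for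
`α < 2` because `t ↦ t^(2-α)` is subadditive. Hence the sum is at most `j^2` times
`∑ n : ℤ, (|n|^(-2) + |n|^(-α))`, which is finite as `α > 1`.
-/

open Real

lemma sub_mul_rpow_sub_one_le_rpow_sub_rpow {α x y : ℝ} (hα : 1 ≤ α) (hy : 0 < y)
    (hyx : y ≤ x) : (x - y) * x ^ (α - 1) ≤ x ^ α - y ^ α := by
  have hx : 0 < x := hy.trans_le hyx
  have hratio : (y / x) ^ α ≤ y / x := by
    simpa using rpow_le_rpow_of_exponent_ge (div_pos hy hx) (div_le_one_of_le₀ hyx hx.le) hα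
  have hxα : x ^ α = x * x ^ (α - 1) := by
    rw [← rpow_one_add' hx.le (by linarith)]; ring_nf
  have hyα : y ^ α ≤ y * x ^ (α - 1) := by
    calc y ^ α = x ^ α * (y / x) ^ α := by
          rw [div_rpow hy.le hx.le]; field_simp
      _ ≤ x ^ α * (y / x) := by gcongr
      _ = y * x ^ (α - 1) := by rw [hxα]; field_simp
  rw [sub_mul, hxα]
  linarith

lemma rpow_two_sub_mul_rpow_le {α m M : ℝ} (hα : 1 ≤ α) (hm : 1 ≤ m) (hmM : m ≤ M) :
    M ^ (2 - α) * m ^ α ≤ m ^ 2 * (1 + (M - m) ^ (2 - α)) := by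
  have hm0 : 0 < m := by linarith
  have hm2 : m ^ (2 - α) * m ^ α = m ^ 2 := by
    rw [← rpow_add hm0, sub_add_cancel, rpow_two]
  have hd : 0 ≤ (M - m) ^ (2 - α) := rpow_nonneg (by linarith) _
  rcases le_or_gt 2 α with h2 | h2
  · calc M ^ (2 - α) * m ^ α ≤ m ^ (2 - α) * m ^ α :=
          mul_le_mul_of_nonneg_right (rpow_le_rpow_of_nonpos hm0 hmM (by linarith)) (by positivity)
      _ ≤ m ^ 2 * (1 + (M - m) ^ (2 - α)) := by nlinarith [sq_nonneg m]
  · have hsub : M ^ (2 - α) ≤ m ^ (2 - α) + (M - m) ^ (2 - α) := by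
      simpa using rpow_add_le_add_rpow hm0.le (sub_nonneg.mpr hmM) (by linarith) (by linarith)
    have hmα : m ^ α ≤ m ^ 2 := by
      rw [← rpow_two]; exact rpow_le_rpow_of_exponent_le hm h2.le
    calc M ^ (2 - α) * m ^ α ≤ (m ^ (2 - α) + (M - m) ^ (2 - α)) * m ^ α := by gcongr
      _ = m ^ 2 + (M - m) ^ (2 - α) * m ^ α := by rw [add_mul, hm2]
      _ ≤ m ^ 2 * (1 + (M - m) ^ (2 - α)) := by nlinarith

lemma rpow_mul_rpow_div_sq_sub_le {α m M : ℝ} (hα : 1 ≤ α) (hm : 1 ≤ m) (hmM : m < M) :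
    m ^ α * M ^ α / (M ^ α - m ^ α) ^ 2 ≤ m ^ 2 * ((M - m) ^ (-2 : ℝ) + (M - m) ^ (-α)) := by
  have hm0 : 0 < m := by linarith
  have hM0 : 0 < M := by linarith
  have hd : 0 < M - m := by linarith
  have hgap : 0 < (M - m) * M ^ (α - 1) := by positivity
  have hMα : M ^ α = M ^ (2 - α) * (M ^ (α - 1)) ^ 2 := by
    rw [sq, ← rpow_add hM0, ← rpow_add hM0]; ring_nf
  calc m ^ α * M ^ α / (M ^ α - m ^ α) ^ 2 ≤ m ^ α * M ^ α / ((M - m) * M ^ (α - 1)) ^ 2 := by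
        gcongr
        exact sub_mul_rpow_sub_one_le_rpow_sub_rpow hα hm0 hmM.le
    _ = M ^ (2 - α) * m ^ α / (M - m) ^ 2 := by
        rw [hMα]; field_simp
    _ ≤ m ^ 2 * (1 + (M - m) ^ (2 - α)) / (M - m) ^ 2 :=
        div_le_div_of_nonneg_right (rpow_two_sub_mul_rpow_le hα hm hmM.le) (by positivity)
    _ = m ^ 2 * ((M - m) ^ (-2 : ℝ) + (M - m) ^ (-α)) := by
        rw [rpow_neg hd.le, rpow_neg hd.le, rpow_sub hd, rpow_two]; field_simp

lemma rpow_neg_sub_zpow_mul_eq {α a b : ℝ} (ha : 0 < a) (hb : 0 < b) :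
    (a ^ (-α) - b ^ (-α)) ^ (-2 : ℤ) * a ^ (-α) * b ^ (-α)
      = a ^ α * b ^ α / (b ^ α - a ^ α) ^ 2 := by
  have hA : 0 < a ^ α := rpow_pos_of_pos ha α
  have hB : 0 < b ^ α := rpow_pos_of_pos hb α
  rw [rpow_neg ha.le, rpow_neg hb.le, inv_sub_inv hA.ne' hB.ne', zpow_neg, zpow_two]
  field_simp

lemma rpow_neg_sub_zpow_mul_le {α a b : ℝ} (hα : 1 ≤ α) (ha : 1 ≤ a) (hb : 1 ≤ b) :
    (a ^ (-α) - b ^ (-α)) ^ (-2 : ℤ) * a ^ (-α) * b ^ (-α)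
      ≤ a ^ 2 * (|b - a| ^ (-2 : ℝ) + |b - a| ^ (-α)) := by
  rw [rpow_neg_sub_zpow_mul_eq (by linarith) (by linarith)]
  rcases lt_trichotomy a b with hab | rfl | hba
  · rw [abs_of_pos (sub_pos.mpr hab)]
    exact rpow_mul_rpow_div_sq_sub_le hα ha hab
  · rw [sub_self, zero_pow two_ne_zero, div_zero]
    positivity
  · rw [abs_sub_comm, abs_of_pos (sub_pos.mpr hba), mul_comm, ← neg_sub, neg_sq]
    calc b ^ α * a ^ α / (a ^ α - b ^ α) ^ 2 ≤ b ^ 2 * ((a - b) ^ (-2 : ℝ) + (a - b) ^ (-α)) :=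
          rpow_mul_rpow_div_sq_sub_le hα hb hba
      _ ≤ a ^ 2 * ((a - b) ^ (-2 : ℝ) + (a - b) ^ (-α)) := by
          have hd : 0 < a - b := sub_pos.mpr hba
          gcongr

/-- For θ_j = j^{-α} with α > 1, Σ_{k≠j} (θ_j-θ_k)^{-2} θ_j θ_k ≤ D j². -/
theorem stmt_9 (α : ℝ) (hα : 1 < α)
    (θ : ℕ → ℝ) (hθ : ∀ j : ℕ, 1 ≤ j → θ j = (j : ℝ) ^ (-α)) :
    ∃ D : ℝ, 0 < D ∧ ∀ j : ℕ, 1 ≤ j →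
      (∑' k : ℕ, if 1 ≤ k ∧ k ≠ j then (θ j - θ k) ^ (-2 : ℤ) * θ j * θ k else 0)
        ≤ D * (j : ℝ) ^ 2 := by
  set G : ℤ → ℝ := fun n => |(n : ℝ)| ^ (-2 : ℝ) + |(n : ℝ)| ^ (-α)
  have hG : Summable G := (summable_abs_int_rpow one_lt_two).add (summable_abs_int_rpow hα)
  have hG0 : ∀ n, 0 ≤ G n := fun n => by positivity
  refine ⟨∑' n, G n, hG.tsum_pos hG0 1 (by norm_num [G]), fun j hj => ?_⟩
  have hbound : ∀ k : ℕ, (if 1 ≤ k ∧ k ≠ j then (θ j - θ k) ^ (-2 : ℤ) * θ j * θ k else 0)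
      ≤ (j : ℝ) ^ 2 * G (k - j) := by
    intro k
    split_ifs with hk
    · rw [hθ j hj, hθ k hk.1]
      simpa [G] using rpow_neg_sub_zpow_mul_le hα.le (Nat.one_le_cast.mpr hj)
        (Nat.one_le_cast.mpr hk.1)
    · exact mul_nonneg (sq_nonneg _) (hG0 _)
  have hnonneg : ∀ k : ℕ,
      0 ≤ (if 1 ≤ k ∧ k ≠ j then (θ j - θ k) ^ (-2 : ℤ) * θ j * θ k else 0) := by
    intro k
    split_ifs with hk
    · rw [hθ j hj, hθ k hk.1]
      exact mul_nonneg (mul_nonneg (Even.zpow_nonneg (by decide) _) (by positivity)) (by positivity)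
    · exact le_rfl
  have hinj : Function.Injective (fun k : ℕ => (k : ℤ) - j) := fun _ _ h => by simpa using h
  have hS : Summable (fun k : ℕ => (j : ℝ) ^ 2 * G (k - j)) := (hG.comp_injective hinj).mul_left _
  calc _ ≤ ∑' k : ℕ, (j : ℝ) ^ 2 * G (k - j) :=
        (Summable.of_nonneg_of_le hnonneg hbound hS).tsum_le_tsum hbound hS
    _ = (j : ℝ) ^ 2 * ∑' k : ℕ, G (k - j) := tsum_mul_left
    _ ≤ (j : ℝ) ^ 2 * ∑' n, G n := by
        gcongr
        exact tsum_comp_le_tsum_of_inj hG hG0 hinj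
    _ = (∑' n, G n) * (j : ℝ) ^ 2 := mul_comm _ _
end

section
/- Let α > 1 and π be real with θ_j = j^{-α}, and suppose |p_k| ≤ C k^{-π} for all k ≥ 1. Then for d = 2 or d = 4 there is a constant C' > 0 such that for all j ≥ 1, Σ_{k≠j} (θ_j - θ_k)^{-d} p_k² ≤ C' (1 + j^{αd + d - 2π}). -/
/-!
Bound `|θ_j - θ_k|` from below in three ranges of `k`: by a multiple of `k^{-α}` when `2k ≤ j`,
of `j^{-α}` when `2j ≤ k`, and in between, by Bernoulli's inequality, of `|k - j| j^{-α-1}`.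
In each range the summand is then at most a constant times `1 + j^{αd + d - 2π}` times one of
`k^{-2}`, `(k - j)^{-2}`, `p_k²`, whose sums are bounded independently of `j`. For small `k` this
uses `k^{αd - 2π} = k^{αd - 2π + 2} k^{-2}`; for large `k` it uses `Σ p_k²` if `π ≤ 1` and
`p_k² ≤ C² j^{2 - 2π} k^{-2}` if `π > 1`. If `Σ p_k²` diverges, so does the series (its terms
with `k > j` dominate `p_k²`), and its `tsum` is `0`.
-/

namespace Real

section Gap

variable {α x y : ℝ}

theorem one_sub_two_rpow_neg_mul_le_sub_rpow_neg (hα : 0 < α) (hx : 0 < x) (hxy : 2 * x ≤ y) :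
    (1 - 2 ^ (-α)) * x ^ (-α) ≤ x ^ (-α) - y ^ (-α) := by
  have hy : y ^ (-α) ≤ 2 ^ (-α) * x ^ (-α) := by
    rw [← mul_rpow zero_le_two hx.le]
    exact rpow_le_rpow_of_nonpos (by positivity) hxy (by linarith)
  linarith

-- Bernoulli's inequality `1 + (α + 1) (t - 1) ≤ t ^ (α + 1)` at `t = y / x`.
theorem mul_sub_mul_rpow_le_sub_rpow_neg (hα : 0 ≤ α) (hx : 0 < x) (hxy : x ≤ y) :
    α * (y - x) * y ^ (-(α + 1)) ≤ x ^ (-α) - y ^ (-α) := by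
  have hy : 0 < y := hx.trans_le hxy
  have hB := one_add_mul_self_le_rpow_one_add (s := y / x - 1)
    (by linarith [(one_le_div hx).2 hxy]) (p := α + 1) (by linarith)
  rw [add_sub_cancel, div_rpow hy.le hx.le,
    show 1 + (α + 1) * (y / x - 1) = (x + (α + 1) * (y - x)) / x by field_simp,
    div_le_div_iff₀ hx (by positivity)] at hB
  have hshift (z : ℝ) (hz : 0 < z) : z ^ (-α) = z * (z ^ (α + 1))⁻¹ := by
    rw [← rpow_neg hz.le, show -α = 1 + -(α + 1) by ring, rpow_add hz, rpow_one]
  rw [hshift x hx, hshift y hy, rpow_neg hy.le]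
  have hX : 0 < x ^ (α + 1) := by positivity
  have hY : 0 < y ^ (α + 1) := by positivity
  field_simp
  nlinarith

theorem mul_abs_sub_mul_rpow_le_abs_sub_rpow_neg {M : ℝ} (hα : 0 ≤ α) (hx : 0 < x) (hy : 0 < y)
    (hxM : x ≤ M) (hyM : y ≤ M) :
    α * |y - x| * M ^ (-(α + 1)) ≤ |x ^ (-α) - y ^ (-α)| := by
  wlog hxy : x ≤ y generalizing x y
  · rw [abs_sub_comm, abs_sub_comm (x ^ (-α))]
    exact this hy hx hyM hxM (le_of_not_ge hxy)
  calc α * |y - x| * M ^ (-(α + 1)) ≤ α * (y - x) * y ^ (-(α + 1)) := by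
        rw [abs_of_nonneg (sub_nonneg.2 hxy)]
        exact mul_le_mul_of_nonneg_left (rpow_le_rpow_of_nonpos hy hyM (by linarith))
          (mul_nonneg hα (sub_nonneg.2 hxy))
    _ ≤ x ^ (-α) - y ^ (-α) := mul_sub_mul_rpow_le_sub_rpow_neg hα hx hxy
    _ ≤ |x ^ (-α) - y ^ (-α)| := le_abs_self _

theorem abs_sub_rpow_neg_rpow_le_of_two_mul_le {r : ℝ} (hα : 0 < α) (hr : 0 ≤ r) (hx : 0 < x)
    (hxy : 2 * x ≤ y) :
    |x ^ (-α) - y ^ (-α)| ^ (-r) ≤ (1 - 2 ^ (-α)) ^ (-r) * x ^ (α * r) := by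
  have hc : 0 < 1 - (2 : ℝ) ^ (-α) :=
    sub_pos.2 (rpow_lt_one_of_one_lt_of_neg one_lt_two (by linarith))
  have hgap := (one_sub_two_rpow_neg_mul_le_sub_rpow_neg hα hx hxy).trans (le_abs_self _)
  calc _ ≤ ((1 - 2 ^ (-α)) * x ^ (-α)) ^ (-r) :=
        rpow_le_rpow_of_nonpos (by positivity) hgap (by linarith)
    _ = _ := by rw [mul_rpow hc.le (by positivity), ← rpow_mul hx.le]; ring_nf

theorem abs_sub_rpow_neg_rpow_le_of_le_two_mul {r : ℝ} (hα : 0 < α) (hr : 2 ≤ r) (hx : 0 < x)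
    (hxy : x ≤ 2 * y) (hyx : y ≤ 2 * x) (hsep : 1 ≤ |y - x|) :
    |x ^ (-α) - y ^ (-α)| ^ (-r) ≤
      (α * 2 ^ (-(α + 1))) ^ (-r) * x ^ ((α + 1) * r) * ((y - x) ^ 2)⁻¹ := by
  have hgap := mul_abs_sub_mul_rpow_le_abs_sub_rpow_neg hα.le hx (by linarith) (M := 2 * x)
    (by linarith) hyx
  rw [mul_rpow zero_le_two hx.le, mul_mul_mul_comm, mul_comm |y - x|, ← mul_assoc] at hgap
  have hsq : |y - x| ^ (-r) ≤ ((y - x) ^ 2)⁻¹ := by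
    calc |y - x| ^ (-r) ≤ |y - x| ^ (-2 : ℝ) := rpow_le_rpow_of_exponent_le hsep (by linarith)
      _ = ((y - x) ^ 2)⁻¹ := by rw [rpow_neg (abs_nonneg _), rpow_two, sq_abs]
  calc _ ≤ (α * 2 ^ (-(α + 1)) * x ^ (-(α + 1)) * |y - x|) ^ (-r) :=
        rpow_le_rpow_of_nonpos (by positivity) hgap (by linarith)
    _ = (α * 2 ^ (-(α + 1))) ^ (-r) * x ^ ((α + 1) * r) * |y - x| ^ (-r) := by
        rw [mul_rpow (by positivity) (abs_nonneg _), mul_rpow (by positivity) (by positivity),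
          ← rpow_mul hx.le]
        ring_nf
    _ ≤ _ := by gcongr

end Gap

section Power

variable {x y a b : ℝ}

theorem rpow_le_one_add_rpow (hx : 1 ≤ x) (hxy : x ≤ y) (hab : a ≤ b) : x ^ a ≤ 1 + y ^ b := by
  have hy : 0 ≤ y ^ b := rpow_nonneg (by linarith) b
  rcases le_or_gt a 0 with ha | ha
  · linarith [rpow_le_one_of_one_le_of_nonpos hx ha]
  · calc x ^ a ≤ y ^ a := rpow_le_rpow (by linarith) hxy ha.le
      _ ≤ y ^ b := rpow_le_rpow_of_exponent_le (hx.trans hxy) hab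
      _ ≤ 1 + y ^ b := by linarith

theorem rpow_le_two_rpow_abs_mul_rpow (hx : 0 < x) (hxy : x ≤ 2 * y) (hyx : y ≤ 2 * x) (a : ℝ) :
    y ^ a ≤ 2 ^ |a| * x ^ a := by
  rcases le_or_gt 0 a with ha | ha
  · rw [abs_of_nonneg ha, ← mul_rpow zero_le_two hx.le]
    exact rpow_le_rpow (by linarith) hyx ha
  · rw [abs_of_neg ha, rpow_neg zero_le_two, ← inv_rpow zero_le_two,
      ← mul_rpow (by norm_num) hx.le]
    exact rpow_le_rpow_of_nonpos (by positivity) (by linarith) ha.le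

theorem rpow_mul_inv_sq {y : ℝ} (hy : 0 < y) (a : ℝ) : y ^ (a + 2) * (y ^ 2)⁻¹ = y ^ a := by
  rw [rpow_add hy, rpow_two, mul_inv_cancel_right₀ (by positivity)]

end Power

end Real

theorem abs_zpow_neg_mul_sq (a q : ℝ) (d : ℕ) :
    |a ^ (-(d : ℤ)) * q ^ 2| = |a| ^ (-(d : ℝ)) * q ^ 2 := by
  rw [abs_mul, abs_zpow, abs_sq, ← Real.rpow_intCast]
  push_cast
  rfl

theorem sq_le_sq_mul_rpow {q C y π : ℝ} (hy : 0 < y) (hq : |q| ≤ C * y ^ (-π)) :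
    q ^ 2 ≤ C ^ 2 * y ^ (-(2 * π)) := by
  calc q ^ 2 = |q| ^ 2 := (sq_abs q).symm
    _ ≤ (C * y ^ (-π)) ^ 2 := pow_le_pow_left₀ (abs_nonneg q) hq 2
    _ = C ^ 2 * y ^ (-(2 * π)) := by
        rw [mul_pow, ← Real.rpow_natCast (y ^ (-π)), ← Real.rpow_mul hy.le]; push_cast; ring_nf

-- The summand `|θ_j - θ_k|^{-d} p_k²` with `x = j`, `y = k`, `r = d`, `q = p_k`.
noncomputable def gapTerm (α r x y q : ℝ) : ℝ := |x ^ (-α) - y ^ (-α)| ^ (-r) * q ^ 2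

section GapTerm

variable {α r π C x y q : ℝ}

theorem gapTerm_le_of_two_mul_le (hα : 0 < α) (hr : 2 ≤ r) (hy : 1 ≤ y) (hyx : 2 * y ≤ x)
    (hq : q ^ 2 ≤ C ^ 2 * y ^ (-(2 * π))) :
    gapTerm α r x y q ≤
      (1 - 2 ^ (-α)) ^ (-r) * C ^ 2 * (1 + x ^ (α * r + r - 2 * π)) * (y ^ 2)⁻¹ := by
  have hy0 : 0 < y := by linarith
  have hc : 0 < 1 - (2 : ℝ) ^ (-α) :=
    sub_pos.2 (Real.rpow_lt_one_of_one_lt_of_neg one_lt_two (by linarith))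
  have hgap := Real.abs_sub_rpow_neg_rpow_le_of_two_mul_le hα (by linarith) hy0 hyx (r := r)
  rw [abs_sub_comm] at hgap
  calc gapTerm α r x y q ≤ (1 - 2 ^ (-α)) ^ (-r) * y ^ (α * r) * (C ^ 2 * y ^ (-(2 * π))) :=
        mul_le_mul hgap hq (sq_nonneg q) (by positivity)
    _ = (1 - 2 ^ (-α)) ^ (-r) * C ^ 2 * (y ^ (α * r - 2 * π + 2) * (y ^ 2)⁻¹) := by
        rw [Real.rpow_mul_inv_sq hy0, sub_eq_add_neg (α * r), Real.rpow_add hy0]; ring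
    _ ≤ _ := by
        rw [← mul_assoc]
        gcongr
        exact Real.rpow_le_one_add_rpow hy (by linarith) (by linarith)

theorem gapTerm_le_of_le_one_of_two_mul_le (hα : 0 < α) (hr : 2 ≤ r) (hπ : π ≤ 1) (hx : 1 ≤ x)
    (hxy : 2 * x ≤ y) :
    gapTerm α r x y q ≤ (1 - 2 ^ (-α)) ^ (-r) * x ^ (α * r + r - 2 * π) * q ^ 2 := by
  have hc : 0 < 1 - (2 : ℝ) ^ (-α) :=
    sub_pos.2 (Real.rpow_lt_one_of_one_lt_of_neg one_lt_two (by linarith))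
  calc gapTerm α r x y q ≤ (1 - 2 ^ (-α)) ^ (-r) * x ^ (α * r) * q ^ 2 :=
        mul_le_mul_of_nonneg_right
          (Real.abs_sub_rpow_neg_rpow_le_of_two_mul_le hα (by linarith) (by linarith) hxy)
          (sq_nonneg q)
    _ ≤ _ := by gcongr; linarith

theorem gapTerm_le_of_one_lt_of_two_mul_le (hα : 0 < α) (hr : 2 ≤ r) (hπ : 1 < π) (hx : 1 ≤ x)
    (hxy : 2 * x ≤ y) (hq : q ^ 2 ≤ C ^ 2 * y ^ (-(2 * π))) :
    gapTerm α r x y q ≤ (1 - 2 ^ (-α)) ^ (-r) * C ^ 2 * x ^ (α * r + r - 2 * π) * (y ^ 2)⁻¹ := by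
  have hx0 : 0 < x := by linarith
  have hy0 : 0 < y := by linarith
  have hc : 0 < 1 - (2 : ℝ) ^ (-α) :=
    sub_pos.2 (Real.rpow_lt_one_of_one_lt_of_neg one_lt_two (by linarith))
  have htail : q ^ 2 ≤ C ^ 2 * x ^ (2 - 2 * π) * (y ^ 2)⁻¹ := by
    calc q ^ 2 ≤ C ^ 2 * (y ^ (-(2 * π) + 2) * (y ^ 2)⁻¹) := by
          rwa [Real.rpow_mul_inv_sq hy0]
      _ ≤ C ^ 2 * (x ^ (2 - 2 * π) * (y ^ 2)⁻¹) := by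
          rw [neg_add_eq_sub]
          exact mul_le_mul_of_nonneg_left (mul_le_mul_of_nonneg_right
            (Real.rpow_le_rpow_of_nonpos hx0 (by linarith) (by linarith)) (by positivity))
            (sq_nonneg C)
      _ = _ := by ring
  calc gapTerm α r x y q
      ≤ (1 - 2 ^ (-α)) ^ (-r) * x ^ (α * r) * (C ^ 2 * x ^ (2 - 2 * π) * (y ^ 2)⁻¹) :=
        mul_le_mul (Real.abs_sub_rpow_neg_rpow_le_of_two_mul_le hα (by linarith) hx0 hxy) htail
          (sq_nonneg q) (by positivity)
    _ = (1 - 2 ^ (-α)) ^ (-r) * C ^ 2 * x ^ (α * r + 2 - 2 * π) * (y ^ 2)⁻¹ := by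
        rw [add_sub_assoc, Real.rpow_add hx0]; ring
    _ ≤ _ := by gcongr

theorem gapTerm_le_of_le_two_mul (hα : 0 < α) (hr : 2 ≤ r) (hx : 0 < x) (hxy : x ≤ 2 * y)
    (hyx : y ≤ 2 * x) (hsep : 1 ≤ |y - x|) (hq : q ^ 2 ≤ C ^ 2 * y ^ (-(2 * π))) :
    gapTerm α r x y q ≤
      (α * 2 ^ (-(α + 1))) ^ (-r) * 2 ^ |2 * π| * C ^ 2 * x ^ (α * r + r - 2 * π) *
        ((y - x) ^ 2)⁻¹ := by
  have hq' : q ^ 2 ≤ C ^ 2 * (2 ^ |2 * π| * x ^ (-(2 * π))) := by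
    refine hq.trans (mul_le_mul_of_nonneg_left ?_ (sq_nonneg C))
    simpa only [abs_neg] using Real.rpow_le_two_rpow_abs_mul_rpow hx hxy hyx (-(2 * π))
  calc gapTerm α r x y q
      ≤ (α * 2 ^ (-(α + 1))) ^ (-r) * x ^ ((α + 1) * r) * ((y - x) ^ 2)⁻¹ *
          (C ^ 2 * (2 ^ |2 * π| * x ^ (-(2 * π)))) :=
        mul_le_mul (Real.abs_sub_rpow_neg_rpow_le_of_le_two_mul hα hr hx hxy hyx hsep) hq'
          (sq_nonneg q) (by positivity)
    _ = _ := by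
        rw [show α * r + r - 2 * π = (α + 1) * r + -(2 * π) by ring, Real.rpow_add hx]; ring

end GapTerm

noncomputable def summand (θ : ℕ → ℝ) (d : ℕ) (p : ℕ → ℝ) (j k : ℕ) : ℝ :=
  if 1 ≤ k ∧ k ≠ j then (θ j - θ k) ^ (-(d : ℤ)) * p k ^ 2 else 0

noncomputable def weight (p : ℕ → ℝ) (j k : ℕ) : ℝ :=
  ((k : ℝ) ^ 2)⁻¹ + (((k : ℝ) - j) ^ 2)⁻¹ + p k ^ 2

section Summand

variable {α π C : ℝ} {θ p : ℕ → ℝ} {d : ℕ}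

theorem exists_abs_summand_le (hα : 0 < α) (hd : 2 ≤ d)
    (hθ : ∀ j : ℕ, 1 ≤ j → θ j = (j : ℝ) ^ (-α))
    (hp : ∀ k : ℕ, 1 ≤ k → |p k| ≤ C * (k : ℝ) ^ (-π)) :
    ∃ K, 0 ≤ K ∧ ∀ j k : ℕ, 1 ≤ j →
      |summand θ d p j k| ≤ K * (1 + (j : ℝ) ^ (α * d + d - 2 * π)) * weight p j k := by
  set c := (1 - (2 : ℝ) ^ (-α)) ^ (-(d : ℝ))
  set c' := (α * 2 ^ (-(α + 1))) ^ (-(d : ℝ)) * 2 ^ |2 * π| * C ^ 2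
  have hc : 0 ≤ c := Real.rpow_nonneg
    (sub_nonneg.2 (Real.rpow_le_one_of_one_le_of_nonpos one_le_two (by linarith))) _
  have hc' : 0 ≤ c' := by positivity
  refine ⟨c * (1 + C ^ 2) + c', by positivity, fun j k hj => ?_⟩
  have hw₁ : 0 ≤ ((k : ℝ) ^ 2)⁻¹ := by positivity
  have hw₂ : 0 ≤ (((k : ℝ) - j) ^ 2)⁻¹ := by positivity
  have hw₃ : 0 ≤ p k ^ 2 := sq_nonneg _
  unfold summand weight
  split_ifs with hk
  swap
  · rw [abs_zero]; positivity
  obtain ⟨hk1, hkj⟩ := hk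
  rw [hθ j hj, hθ k hk1, abs_zpow_neg_mul_sq]
  change gapTerm α d j k (p k) ≤ _
  have hj1 : (1 : ℝ) ≤ j := by exact_mod_cast hj
  have hk1' : (1 : ℝ) ≤ k := by exact_mod_cast hk1
  have hr : (2 : ℝ) ≤ d := by exact_mod_cast hd
  have hq := sq_le_sq_mul_rpow (by positivity) (hp k hk1)
  have hB : 0 ≤ (j : ℝ) ^ (α * d + d - 2 * π) := by positivity
  rcases le_or_gt (2 * k) j with hlow | hlow
  · refine (gapTerm_le_of_two_mul_le hα hr hk1' (by exact_mod_cast hlow) hq).trans ?_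
    gcongr
    · nlinarith
    · linarith
  rcases le_or_gt (2 * j) k with hfar | hmid
  · have hfar' : 2 * (j : ℝ) ≤ k := by exact_mod_cast hfar
    rcases le_or_gt π 1 with hπ | hπ
    · refine (gapTerm_le_of_le_one_of_two_mul_le hα hr hπ hj1 hfar').trans ?_
      gcongr
      · nlinarith [sq_nonneg C]
      · linarith
      · linarith
    · refine (gapTerm_le_of_one_lt_of_two_mul_le hα hr hπ hj1 hfar' hq).trans ?_
      gcongr
      · nlinarith
      · linarith
      · linarith
  · have hsep : (1 : ℝ) ≤ |(k : ℝ) - j| := by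
      exact_mod_cast Int.one_le_abs (sub_ne_zero.2 (by exact_mod_cast hkj : (k : ℤ) ≠ j))
    refine (gapTerm_le_of_le_two_mul hα hr (by positivity) (by exact_mod_cast hlow.le)
      (by exact_mod_cast hmid.le) hsep hq).trans ?_
    gcongr
    · nlinarith
    · linarith
    · linarith

theorem not_summable_summand (hα : 0 < α) (hθ : ∀ j : ℕ, 1 ≤ j → θ j = (j : ℝ) ^ (-α))
    {j : ℕ} (hj : 1 ≤ j) (hp : ¬ Summable fun k => p k ^ 2) :
    ¬ Summable (summand θ d p j) := by
  intro hs
  refine hp ((summable_nat_add_iff (j + 1)).1 ?_)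
  refine ((summable_nat_add_iff (j + 1)).2 hs).of_nonneg_of_le (fun _ => sq_nonneg _) fun i => ?_
  have hjk : (j : ℝ) < (i + (j + 1) : ℕ) := by exact_mod_cast (by omega : j < i + (j + 1))
  have hj0 : (0 : ℝ) < j := by exact_mod_cast hj
  rw [summand, if_pos ⟨by omega, by omega⟩, hθ j hj, hθ _ (by omega)]
  have hgap : 0 < (j : ℝ) ^ (-α) - ((i + (j + 1) : ℕ) : ℝ) ^ (-α) :=
    sub_pos.2 (Real.rpow_lt_rpow_of_neg hj0 hjk (by linarith))
  have hgap_le : (j : ℝ) ^ (-α) - ((i + (j + 1) : ℕ) : ℝ) ^ (-α) ≤ 1 := by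
    have := Real.rpow_le_one_of_one_le_of_nonpos (by exact_mod_cast hj : (1 : ℝ) ≤ j)
      (neg_nonpos.2 hα.le)
    have : 0 ≤ ((i + (j + 1) : ℕ) : ℝ) ^ (-α) := by positivity
    linarith
  exact le_mul_of_one_le_left (sq_nonneg _) (one_le_zpow_of_nonpos₀ hgap hgap_le (by omega))

end Summand

theorem summable_int_inv_sq : Summable fun n : ℤ => ((n : ℝ) ^ 2)⁻¹ := by
  simpa only [one_div] using Real.summable_one_div_int_pow.2 one_lt_two

theorem summable_inv_sq_sub_natCast (j : ℕ) : Summable fun k : ℕ => (((k : ℝ) - j) ^ 2)⁻¹ := by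
  have hinj : Function.Injective fun k : ℕ => (k : ℤ) - j := fun a b h => by simpa using h
  simpa [Function.comp_def] using summable_int_inv_sq.comp_injective hinj

theorem tsum_inv_sq_sub_natCast_le (j : ℕ) :
    ∑' k : ℕ, (((k : ℝ) - j) ^ 2)⁻¹ ≤ ∑' n : ℤ, ((n : ℝ) ^ 2)⁻¹ :=
   Summable.tsum_le_tsum_of_inj (fun k : ℕ => (k : ℤ) - j)
    (fun a b h => by simpa using h) (fun _ _ => by positivity) (fun k => by push_cast; rfl)
    (summable_inv_sq_sub_natCast j) summable_int_inv_sq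

theorem summable_weight {p : ℕ → ℝ} (hp : Summable fun k => p k ^ 2) (j : ℕ) :
    Summable (weight p j) := by
  have h₀ : Summable fun k : ℕ => ((k : ℝ) ^ 2)⁻¹ := Real.summable_nat_pow_inv.2 one_lt_two
  exact (h₀.add (summable_inv_sq_sub_natCast j)).add hp

theorem tsum_weight_le {p : ℕ → ℝ} (hp : Summable fun k => p k ^ 2) (j : ℕ) :
    ∑' k, weight p j k ≤ 2 * ∑' n : ℤ, ((n : ℝ) ^ 2)⁻¹ + ∑' k, p k ^ 2 := by
  have h₀ : Summable fun k : ℕ => ((k : ℝ) ^ 2)⁻¹ := Real.summable_nat_pow_inv.2 one_lt_two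
  have h₀' : ∑' k : ℕ, ((k : ℝ) ^ 2)⁻¹ ≤ ∑' n : ℤ, ((n : ℝ) ^ 2)⁻¹ := by
    simpa using tsum_inv_sq_sub_natCast_le 0
  unfold weight
  have hshift := summable_inv_sq_sub_natCast j
  rw [(h₀.add hshift).tsum_add hp, h₀.tsum_add hshift]
  linarith [tsum_inv_sq_sub_natCast_le j]

theorem stmt_10_general (α π C : ℝ) (hα : 1 < α)
    (θ : ℕ → ℝ) (hθ : ∀ j : ℕ, 1 ≤ j → θ j = (j : ℝ) ^ (-α))
    (p : ℕ → ℝ) (hp : ∀ k : ℕ, 1 ≤ k → |p k| ≤ C * (k : ℝ) ^ (-π))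
    (d : ℕ) (hd : d = 2 ∨ d = 4) :
    ∃ C' : ℝ, 0 < C' ∧ ∀ j : ℕ, 1 ≤ j →
      (∑' k : ℕ, if 1 ≤ k ∧ k ≠ j then (θ j - θ k) ^ (-(d : ℤ)) * (p k) ^ 2 else 0)
        ≤ C' * (1 + (j : ℝ) ^ (α * d + d - 2 * π)) := by
  have hα₀ : 0 < α := by linarith
  obtain ⟨K, hK, hbound⟩ := exists_abs_summand_le hα₀ (by omega : 2 ≤ d) hθ hp
  set W := 2 * ∑' n : ℤ, ((n : ℝ) ^ 2)⁻¹ + ∑' k, p k ^ 2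
  have hW : 0 ≤ W := by positivity
  refine ⟨K * W + 1, by positivity, fun j hj => ?_⟩
  change ∑' k, summand θ d p j k ≤ _
  set B := 1 + (j : ℝ) ^ (α * d + d - 2 * π)
  have hB : 0 ≤ B := by positivity
  by_cases hps : Summable fun k => p k ^ 2
  · have hmaj := (summable_weight hps j).mul_left (K * B)
    calc ∑' k, summand θ d p j k ≤ ∑' k, K * B * weight p j k :=
          (hmaj.of_norm_bounded (hbound j · hj)).tsum_le_tsum
            (fun k => (le_abs_self _).trans (hbound j k hj)) hmaj
      _ = K * B * ∑' k, weight p j k := tsum_mul_left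
      _ ≤ K * B * W := by gcongr; exact tsum_weight_le hps j
      _ ≤ (K * W + 1) * B := by nlinarith
  · rw [tsum_eq_zero_of_not_summable (not_summable_summand hα₀ hθ hj hps)]
    positivity

/-- For θ_j = j^{-α}, α > 1, |p_k| ≤ C k^{-π}, and d = 2 or d = 4, there is
C' > 0 with Σ_{k≠j} (θ_j-θ_k)^{-d} p_k² ≤ C' (1 + j^{αd+d-2π}) for all j ≥ 1. -/
theorem stmt_10 (α π C : ℝ) (hα : 1 < α) (hC : 0 < C)
    (θ : ℕ → ℝ) (hθ : ∀ j : ℕ, 1 ≤ j → θ j = (j : ℝ) ^ (-α))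
    (p : ℕ → ℝ) (hp : ∀ k : ℕ, 1 ≤ k → |p k| ≤ C * (k : ℝ) ^ (-π))
    (d : ℕ) (hd : d = 2 ∨ d = 4) :
    ∃ C' : ℝ, 0 < C' ∧ ∀ j : ℕ, 1 ≤ j →
      (∑' k : ℕ, if 1 ≤ k ∧ k ≠ j then (θ j - θ k) ^ (-(d : ℤ)) * (p k) ^ 2 else 0)
        ≤ C' * (1 + (j : ℝ) ^ (α * d + d - 2 * π)) :=
  stmt_10_general α π C hα θ hθ p hp d hd
end
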